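/- arXiv:2305.04012 — 5 statements merged into one kernel-verified Lean document; each statement's English description precedes it below -/
import Mathlib

section
/- In L, for any m ∈ ℕ₊ and any infinite subset {n_k : k ∈ ℕ₊} of ℕ₊, the set {x_{m,n_k} : k ∈ ℕ₊} has x_{m,ω} as its unique upper bound in L; in particular ⋁_{k} x_{m,n_k} = x_{m,ω}. -/
/-- Nonempty finite sequences of positive naturals. -/
abbrev FinSeq := {l : List ℕ+ // l ≠ []}

/-- `Sig` : nonempty finite or countably infinite sequences of positive naturals. -/
abbrev Sig := FinSeq ⊕ (ℕ → ℕ+)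

/-- The substring (prefix) order on `Sig`. -/
def sigLE : Sig → Sig → Prop
  | Sum.inl a, Sum.inl b => a.val <+: b.val
  | Sum.inl a, Sum.inr f => ∀ i : Fin a.val.length, a.val.get i = f i.val
  | Sum.inr f, Sum.inr g => f = g
  | Sum.inr _, Sum.inl _ => False

/-- A subset `D` is directed w.r.t. relation `r`. -/
def DirectedSet {A : Type _} (r : A → A → Prop) (D : Set A) : Prop :=
  D.Nonempty ∧ ∀ a ∈ D, ∀ b ∈ D, ∃ c ∈ D, r a c ∧ r b c

/-- `s` is the supremum (least upper bound) of `D` w.r.t. `r`. -/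
def IsSupOf {A : Type _} (r : A → A → Prop) (D : Set A) (s : A) : Prop :=
  (∀ a ∈ D, r a s) ∧ ∀ u, (∀ a ∈ D, r a u) → r s u

/-- `c` is a compact element w.r.t. `r`. -/
def IsCompactEl {A : Type _} (r : A → A → Prop) (c : A) : Prop :=
  ∀ D s, DirectedSet r D → IsSupOf r D s → r c s → ∃ d ∈ D, r c d

/-- `x` is maximal w.r.t. `r`. -/
def IsMaximalEl {A : Type _} (r : A → A → Prop) (x : A) : Prop :=
  ∀ y, r x y → y = x

/-- `U` is Scott open w.r.t. `r`. -/
def ScottOpen {A : Type _} (r : A → A → Prop) (U : Set A) : Prop :=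
  (∀ x ∈ U, ∀ y, r x y → y ∈ U) ∧
  ∀ D s, DirectedSet r D → IsSupOf r D s → s ∈ U → ∃ d ∈ D, d ∈ U

/-- The poset `X`: pairs `x_{m,n}` with `m ∈ ℕ₊`, `n ∈ ℕ₊ ∪ {ω}` (`ω = ⊤`). -/
abbrev XP := ℕ+ × WithTop ℕ+

/-- Order on `X`: `x_{m₁,n₁} ≤ x_{m₂,n₂}` iff `m₁ = m₂` and `n₁ ≤ n₂`. -/
def xLE : XP → XP → Prop := fun a b => a.1 = b.1 ∧ a.2 ≤ b.2

/-- The carrier of `L = X ∪ Σ ∪ Σ*`. -/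
abbrev LP := XP ⊕ (Sig ⊕ Sig)

def toX (p : XP) : LP := Sum.inl p
/-- The copy `Σ` inside `L`. -/
def toS (a : Sig) : LP := Sum.inr (Sum.inl a)
/-- The copy `Σ*` inside `L`. -/
def toS' (a : Sig) : LP := Sum.inr (Sum.inr a)

/-- Underlying sequence of an element of `Σ ∪ Σ*`. -/
def sigOf : Sig ⊕ Sig → Sig := Sum.elim id id

/-- `entryGE v k m` : the length of `v` is `≥ k+1` and its `(k+1)`-th entry is `≥ m`
(0-based index `k`). -/
def entryGE : Sig → ℕ → ℕ+ → Prop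
  | Sum.inl l, k, m => ∃ h : k < l.val.length, m ≤ l.val.get ⟨k, h⟩
  | Sum.inr f, k, m => m ≤ f k

/-- The order on `L`. -/
def lLE : LP → LP → Prop
  | Sum.inl x, Sum.inl y => xLE x y
  | Sum.inl x, Sum.inr w =>
      ∃ m : ℕ+, x.2 = (m : WithTop ℕ+) ∧ entryGE (sigOf w) x.1.natPred m
  | Sum.inr (Sum.inl a), Sum.inr w => sigLE a (sigOf w)
  | Sum.inr (Sum.inr a), Sum.inr (Sum.inr b) => sigLE a b
  | Sum.inr (Sum.inr _), Sum.inr (Sum.inl _) => False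
  | Sum.inr _, Sum.inl _ => False

/-!
Any `u ∈ L` other than `x_{m,ω}` lies above only boundedly many `x_{m,n}`: inside `X` the bound
is the second coordinate of `u`, and above a sequence `v ∈ Σ ∪ Σ*` it is the `m`-th entry of `v`
(or nothing at all if `v` is too short). An infinite set of indices is unbounded, so `x_{m,ω}`
is the only upper bound, and hence also the least one.
-/

theorem isSupOf_of_forall_upperBound_iff {A : Type*} {r : A → A → Prop} {D : Set A} {s : A}
    (hD : ∀ u, (∀ a ∈ D, r a u) ↔ u = s) (hs : r s s) : IsSupOf r D s :=
  ⟨(hD s).2 rfl, fun u hu => (hD u).1 hu ▸ hs⟩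

theorem exists_forall_entryGE_le (v : Sig) (k : ℕ) : ∃ b : ℕ+, ∀ n, entryGE v k n → n ≤ b := by
  rcases v with l | f
  · by_cases hk : k < l.val.length
    · exact ⟨l.val.get ⟨k, hk⟩, fun n ⟨_, hn⟩ => hn⟩
    · exact ⟨1, fun n ⟨hk', _⟩ => absurd hk' hk⟩
  · exact ⟨f k, fun n hn => hn⟩

theorem lLE_toX_inr_iff (m n : ℕ+) (w : Sig ⊕ Sig) :
    lLE (toX (m, (n : WithTop ℕ+))) (Sum.inr w) ↔ entryGE (sigOf w) m.natPred n := by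
  simp only [toX, lLE, WithTop.coe_inj, exists_eq_left']

theorem lLE_toX_top (m : ℕ+) (n : WithTop ℕ+) : lLE (toX (m, n)) (toX (m, ⊤)) :=
  ⟨rfl, le_top⟩

theorem bddAbove_setOf_lLE_toX {m : ℕ+} {u : LP} (hu : u ≠ toX (m, ⊤)) :
    BddAbove {n : ℕ+ | lLE (toX (m, (n : WithTop ℕ+))) u} := by
  rcases u with ⟨m', n'⟩ | w
  · induction n' using WithTop.recTopCoe with
    | top => exact ⟨1, fun n ⟨hm, _⟩ => absurd (congrArg (fun k => toX (k, ⊤)) hm).symm hu⟩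
    | coe b => exact ⟨b, fun n ⟨_, hn⟩ => WithTop.coe_le_coe.1 hn⟩
  · obtain ⟨b, hb⟩ := exists_forall_entryGE_le (sigOf w) m.natPred
    exact ⟨b, fun n hn => hb n ((lLE_toX_inr_iff m n w).1 hn)⟩

theorem stmt11 (m : ℕ+) (S : Set ℕ+) (hS : S.Infinite) :
    (∀ u : LP,
      (∀ n ∈ S, lLE (toX (m, (n : WithTop ℕ+))) u) ↔ u = toX (m, ⊤)) ∧
    IsSupOf lLE {u : LP | ∃ n ∈ S, u = toX (m, (n : WithTop ℕ+))} (toX (m, ⊤)) := by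
  have upperBound_iff : ∀ u : LP,
      (∀ n ∈ S, lLE (toX (m, (n : WithTop ℕ+))) u) ↔ u = toX (m, ⊤) := by
    refine fun u => ⟨fun hu => ?_, fun hu n _ => hu ▸ lLE_toX_top m n⟩
    by_contra hne
    exact hS.not_bddAbove ((bddAbove_setOf_lLE_toX hne).mono hu)
  refine ⟨upperBound_iff, isSupOf_of_forall_upperBound_iff
    (fun u => Iff.trans ?_ (upperBound_iff u)) (lLE_toX_top m ⊤)⟩
  exact ⟨fun hu n hn => hu _ ⟨n, hn, rfl⟩, fun hu _ ⟨n, hn, ha⟩ => ha ▸ hu n hn⟩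
end

section
/- The poset L is a dcpo: every directed subset of L has a supremum in L. -/
/-! The prefix order on `Σ` is directed complete: a directed family either has a longest member,
which is then its greatest element, or consists of ever longer compatible finite sequences whose
union is an infinite sequence. A directed `D ⊆ L` meeting `Σ ∪ Σ*` has as supremum the supremum
`c` of the sequences occurring in it, taken in `Σ*` exactly when `D` meets `Σ*`; the points of `X`
in `D` lie below members of `D` in `Σ ∪ Σ*`, hence below `c`. A directed `D ⊆ X` lies in one chain
`x_{k,·}` and has a largest element or the supremum `x_{k,ω}`, since `v ∈ Σ ∪ Σ*` bounds `x_{k,n}`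
only for `n ≤ v_k`. -/

lemma isSupOf_of_mem {A : Type*} {r : A → A → Prop} {D : Set A} {s : A} (hs : s ∈ D)
    (h : ∀ a ∈ D, r a s) : IsSupOf r D s :=
  ⟨h, fun _ hu => hu s hs⟩

lemma WithTop.exists_isGreatest_of_le_coe {α : Type*} [LinearOrder α] [SuccOrder α]
    [IsSuccArchimedean α] {S : Set (WithTop α)} (hS : S.Nonempty) {e : α}
    (he : ∀ n ∈ S, n ≤ e) : ∃ n, IsGreatest S n := by
  obtain ⟨n₀, hn₀⟩ := hS
  obtain ⟨a₀, rfl⟩ :=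
    WithTop.ne_top_iff_exists.mp (ne_top_of_le_ne_top WithTop.coe_ne_top (he n₀ hn₀))
  obtain ⟨a, haS, ha⟩ :=
    BddAbove.exists_isGreatest_of_nonempty (S := ((↑) : α → WithTop α) ⁻¹' S)
      ⟨e, fun b hb => WithTop.coe_le_coe.mp (he _ hb)⟩ ⟨a₀, hn₀⟩
  refine ⟨a, haS, fun n hn => ?_⟩
  obtain ⟨b, rfl⟩ :=
    WithTop.ne_top_iff_exists.mp (ne_top_of_le_ne_top WithTop.coe_ne_top (he n hn))
  exact WithTop.coe_le_coe.mpr (ha hn)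

namespace Sig

def len : Sig → ℕ∞
  | .inl l => l.val.length
  | .inr _ => ⊤

lemma eq_of_sigLE_of_len_le {a b : Sig} (hab : sigLE a b) (hba : b.len ≤ a.len) : a = b := by
  cases a <;> cases b
  · exact congrArg Sum.inl (Subtype.ext (hab.eq_of_length_le (by simpa [len] using hba)))
  · exact absurd hba (by simp [len])
  · exact hab.elim
  · exact congrArg Sum.inr hab

lemma isSupOf_of_forall_len_le {C : Set Sig} (hC : DirectedSet sigLE C) {c : Sig} (hc : c ∈ C)
    (hmax : ∀ a ∈ C, a.len ≤ c.len) : IsSupOf sigLE C c :=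
  isSupOf_of_mem hc fun a ha => by
    obtain ⟨e, he, hae, hce⟩ := hC.2 a ha c hc
    rwa [eq_of_sigLE_of_len_le hce (hmax e he)]

lemma exists_isSupOf_of_forall_exists_len_lt {C : Set Sig} (hC : DirectedSet sigLE C)
    (hnomax : ∀ c ∈ C, ∃ a ∈ C, c.len < a.len) : ∃ c, IsSupOf sigLE C c := by
  have hfin : ∀ a ∈ C, ∃ l, a = .inl l := by
    rintro (l | f) ha
    · exact ⟨l, rfl⟩
    · obtain ⟨a, -, h⟩ := hnomax _ ha
      exact absurd h (not_lt_of_ge le_top)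
  have hlong : ∀ n : ℕ, ∃ l : FinSeq, .inl l ∈ C ∧ n < l.val.length := by
    have : ∀ n : ℕ, ∃ a ∈ C, (n : ℕ∞) < a.len := by
      intro n
      induction n with
      | zero =>
        obtain ⟨a, ha⟩ := hC.1
        obtain ⟨b, hb, hab⟩ := hnomax a ha
        exact ⟨b, hb, lt_of_le_of_lt (by simp) hab⟩
      | succ n ih =>
        obtain ⟨a, ha, hna⟩ := ih
        obtain ⟨b, hb, hab⟩ := hnomax a ha
        exact ⟨b, hb, (Order.add_one_le_of_lt hna).trans_lt hab⟩
    intro n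
    obtain ⟨a, ha, hn⟩ := this n
    obtain ⟨l, rfl⟩ := hfin a ha
    exact ⟨l, ha, by simpa [len] using hn⟩
  choose q hqC hqlen using hlong
  have hcompat : ∀ l l' : FinSeq, .inl l ∈ C → .inl l' ∈ C → ∀ i (hi : i < l.val.length)
      (hi' : i < l'.val.length), l.val[i] = l'.val[i] := by
    intro l l' hl hl' i hi hi'
    obtain ⟨e, he, hle, hle'⟩ := hC.2 _ hl _ hl'
    obtain ⟨m, rfl⟩ := hfin e he
    exact (List.IsPrefix.getElem hle hi).trans (List.IsPrefix.getElem hle' hi').symm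
  refine ⟨.inr fun i => (q i).val[i]'(hqlen i), fun a ha => ?_, fun v hv => ?_⟩
  · obtain ⟨l, rfl⟩ := hfin a ha
    exact fun i => hcompat l _ ha (hqC i) i i.isLt (hqlen i)
  · rcases v with l | g
    · have hpre : (q l.val.length).val <+: l.val := hv _ (hqC _)
      exact absurd hpre.length_le (not_le_of_gt (hqlen _))
    · funext i
      simpa using hv _ (hqC i) ⟨i, hqlen i⟩

lemma exists_isSupOf {C : Set Sig} (hC : DirectedSet sigLE C) : ∃ c, IsSupOf sigLE C c := by
  by_cases hmax : ∃ c ∈ C, ∀ a ∈ C, a.len ≤ c.len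
  · obtain ⟨c, hc, hmax⟩ := hmax
    exact ⟨c, isSupOf_of_forall_len_le hC hc hmax⟩
  · push Not at hmax
    exact exists_isSupOf_of_forall_exists_len_lt hC hmax

end Sig

lemma entryGE_mono {a b : Sig} (h : sigLE a b) {i : ℕ} {m : ℕ+} (ha : entryGE a i m) :
    entryGE b i m := by
  rcases a with l | f <;> rcases b with l' | g
  · obtain ⟨hi, hm⟩ := ha
    exact ⟨hi.trans_le h.length_le, by simpa [← h.getElem hi] using hm⟩
  · obtain ⟨hi, hm⟩ := ha
    exact hm.trans_eq (h ⟨i, hi⟩)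
  · exact h.elim
  · exact h ▸ ha

lemma exists_forall_entryGE_le_s13 (g : Sig) (i : ℕ) : ∃ e : ℕ+, ∀ m, entryGE g i m → m ≤ e := by
  rcases g with l | f
  · by_cases hi : i < l.val.length
    · exact ⟨l.val.get ⟨i, hi⟩, fun m hm => hm.2⟩
    · exact ⟨1, fun m hm => absurd hm.1 hi⟩
  · exact ⟨f i, fun m hm => hm⟩

lemma lLE_inr_inr_iff {w w' : Sig ⊕ Sig} :
    lLE (.inr w) (.inr w') ↔ sigLE (sigOf w) (sigOf w') ∧ (w.isRight → w'.isRight) := by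
  rcases w with a | a <;> rcases w' with b | b <;> simp [lLE, sigOf]

lemma exists_eq_inr_of_lLE_inr {w : Sig ⊕ Sig} {u : LP} (h : lLE (.inr w) u) :
    ∃ w', u = .inr w' := by
  rcases u with p | w'
  · rcases w with a | a <;> exact h.elim
  · exact ⟨w', rfl⟩

lemma lLE_inl_inr_of_sigLE {p : XP} {w w' : Sig ⊕ Sig} (h : lLE (.inl p) (.inr w))
    (hw : sigLE (sigOf w) (sigOf w')) : lLE (.inl p) (.inr w') := by
  obtain ⟨m, hm, he⟩ := h
  exact ⟨m, hm, entryGE_mono hw he⟩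

lemma exists_isSupOf_of_subset_range_inl {D : Set LP} (hD : DirectedSet lLE D)
    (hX : D ⊆ Set.range Sum.inl) : ∃ s, IsSupOf lLE D s := by
  obtain ⟨_, hd₀⟩ := hD.1
  obtain ⟨⟨k, n₀⟩, rfl⟩ := hX hd₀
  have hchain : ∀ d ∈ D, ∃ n, d = .inl (k, n) := by
    intro d hd
    obtain ⟨⟨k', n⟩, rfl⟩ := hX hd
    obtain ⟨c, hc, hdc, hd₀c⟩ := hD.2 _ hd _ hd₀
    obtain ⟨p, rfl⟩ := hX hc
    exact ⟨n, by rw [show k' = k from hdc.1.trans hd₀c.1.symm]⟩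
  set N : Set (WithTop ℕ+) := {n | .inl (k, n) ∈ D}
  by_cases hgreatest : ∃ n, IsGreatest N n
  · obtain ⟨n, hnN, hn⟩ := hgreatest
    refine ⟨.inl (k, n), isSupOf_of_mem hnN fun d hd => ?_⟩
    obtain ⟨n', rfl⟩ := hchain d hd
    exact ⟨rfl, hn hd⟩
  refine ⟨.inl (k, ⊤), fun d hd => ?_, fun u hu => ?_⟩
  · obtain ⟨n, rfl⟩ := hchain d hd
    exact ⟨rfl, le_top⟩
  have hbounded : ∀ e : ℕ+, ¬ ∀ n ∈ N, n ≤ e := fun e he =>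
    hgreatest (WithTop.exists_isGreatest_of_le_coe ⟨n₀, hd₀⟩ he)
  rcases u with ⟨k', n'⟩ | w
  · obtain ⟨rfl, -⟩ := hu _ hd₀
    rcases n' with _ | e
    · exact ⟨rfl, le_rfl⟩
    · exact absurd (fun n hn => (hu (.inl (k, n)) hn).2) (hbounded e)
  · obtain ⟨e, he⟩ := exists_forall_entryGE_le_s13 (sigOf w) k.natPred
    refine absurd (fun n hn => ?_) (hbounded e)
    obtain ⟨m, rfl, hm⟩ := hu _ hn
    exact WithTop.coe_le_coe.mpr (he m hm)

lemma exists_isSupOf_of_inr_mem {D : Set LP} (hD : DirectedSet lLE D) {w₀ : Sig ⊕ Sig}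
    (hw₀ : .inr w₀ ∈ D) : ∃ s, IsSupOf lLE D s := by
  classical
  set C : Set Sig := sigOf '' {w | .inr w ∈ D}
  have hC : DirectedSet sigLE C := by
    refine ⟨⟨_, w₀, hw₀, rfl⟩, ?_⟩
    rintro _ ⟨w, hw, rfl⟩ _ ⟨w', hw', rfl⟩
    obtain ⟨e, he, hwe, hw'e⟩ := hD.2 _ hw _ hw'
    obtain ⟨v, rfl⟩ := exists_eq_inr_of_lLE_inr hwe
    exact ⟨sigOf v, ⟨v, he, rfl⟩, (lLE_inr_inr_iff.mp hwe).1, (lLE_inr_inr_iff.mp hw'e).1⟩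
  obtain ⟨c, hcub, hcleast⟩ := Sig.exists_isSupOf hC
  set ws : Sig ⊕ Sig := if ∃ w, .inr w ∈ D ∧ w.isRight then .inr c else .inl c
  have hws : sigOf ws = c := by unfold ws; split_ifs <;> rfl
  have hright : ws.isRight → ∃ w, .inr w ∈ D ∧ w.isRight := by unfold ws; split_ifs <;> simp_all
  refine ⟨.inr ws, fun d hd => ?_, fun u hu => ?_⟩
  · rcases d with p | w
    · obtain ⟨e, he, hpe, hw₀e⟩ := hD.2 _ hd _ hw₀
      obtain ⟨v, rfl⟩ := exists_eq_inr_of_lLE_inr hw₀e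
      exact lLE_inl_inr_of_sigLE hpe (hws ▸ hcub _ ⟨v, he, rfl⟩)
    · refine lLE_inr_inr_iff.mpr ⟨hws ▸ hcub _ ⟨w, hd, rfl⟩, fun hw => ?_⟩
      unfold ws
      rw [if_pos ⟨w, hd, hw⟩]
      rfl
  · obtain ⟨wu, rfl⟩ := exists_eq_inr_of_lLE_inr (hu _ hw₀)
    refine lLE_inr_inr_iff.mpr ⟨hws ▸ hcleast _ ?_, fun h => ?_⟩
    · rintro _ ⟨w, hw, rfl⟩
      exact (lLE_inr_inr_iff.mp (hu _ hw)).1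
    · obtain ⟨w, hw, hwr⟩ := hright h
      exact (lLE_inr_inr_iff.mp (hu _ hw)).2 hwr

theorem stmt13 (D : Set LP) (hD : DirectedSet lLE D) :
    ∃ s, IsSupOf lLE D s := by
  by_cases hseq : ∃ w : Sig ⊕ Sig, .inr w ∈ D
  · obtain ⟨w₀, hw₀⟩ := hseq
    exact exists_isSupOf_of_inr_mem hD hw₀
  · refine exists_isSupOf_of_subset_range_inl hD fun d hd => ?_
    rcases d with p | w
    · exact ⟨p, rfl⟩
    · exact absurd ⟨w, hd⟩ hseq
end

section
/- In the dcpo L, if D is a directed subset whose supremum lies in Σ*, then D ∩ Σ* is directed, cofinal in D, and ⋁(D ∩ Σ*) = ⋁D. -/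
/-!
`Σ*` is Scott open: it is an upper set, and a directed set `D` avoiding `Σ*` would have the
copy `a ∈ Σ` of its supremum `a* ∈ Σ*` as a strictly smaller upper bound, since elements of
`X ∪ Σ` lie below `a*` exactly when they lie below `a`. Hence `D` meets `Σ*`, directedness makes
`D ∩ Σ*` cofinal in `D`, and a cofinal subset has the same supremum.
-/

section ScottOpen

variable {A : Type*} {r : A → A → Prop} {D U : Set A} {s : A}

theorem ScottOpen.cofinal_inter (hU : ScottOpen r U) (hD : DirectedSet r D)
    (hs : IsSupOf r D s) (hsU : s ∈ U) : ∀ d ∈ D, ∃ e ∈ D ∩ U, r d e := by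
  obtain ⟨u, huD, huU⟩ := hU.2 D s hD hs hsU
  intro d hd
  obtain ⟨e, heD, hde, hue⟩ := hD.2 d hd u huD
  exact ⟨e, ⟨heD, hU.1 u huU e hue⟩, hde⟩

theorem ScottOpen.directedSet_inter (hU : ScottOpen r U) (hD : DirectedSet r D)
    (hs : IsSupOf r D s) (hsU : s ∈ U) : DirectedSet r (D ∩ U) := by
  obtain ⟨d, hd⟩ := hD.1
  obtain ⟨e, he, -⟩ := hU.cofinal_inter hD hs hsU d hd
  refine ⟨⟨e, he⟩, fun a ha b hb => ?_⟩
  obtain ⟨c, hcD, hac, hbc⟩ := hD.2 a ha.1 b hb.1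
  exact ⟨c, ⟨hcD, hU.1 a ha.2 c hac⟩, hac, hbc⟩

theorem IsSupOf.of_cofinal [IsTrans A r] {E : Set A} (hs : IsSupOf r D s) (hED : E ⊆ D)
    (hcof : ∀ d ∈ D, ∃ e ∈ E, r d e) : IsSupOf r E s := by
  refine ⟨fun e he => hs.1 e (hED he), fun u hu => hs.2 u fun d hd => ?_⟩
  obtain ⟨e, he, hde⟩ := hcof d hd
  exact _root_.trans hde (hu e he)

end ScottOpen

theorem sigLE_trans {a b c : Sig} (hab : sigLE a b) (hbc : sigLE b c) : sigLE a c := by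
  rcases a with a | f <;> rcases b with b | g <;> rcases c with c | h <;>
    simp only [sigLE] at hab hbc ⊢
  · exact hab.trans hbc
  · intro i
    rw [← hbc ⟨i, i.isLt.trans_le hab.length_le⟩]
    simp only [List.get_eq_getElem, hab.getElem i.isLt]
  · exact hbc ▸ hab
  · exact hab.trans hbc

theorem entryGE_of_sigLE {v w : Sig} {k : ℕ} {m : ℕ+} (hv : entryGE v k m) (hvw : sigLE v w) :
    entryGE w k m := by
  rcases v with l | f <;> rcases w with l' | g <;> simp only [sigLE] at hvw
  · obtain ⟨hk, hm⟩ := hv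
    refine ⟨hk.trans_le hvw.length_le, ?_⟩
    simpa only [List.get_eq_getElem, hvw.getElem hk] using hm
  · obtain ⟨hk, hm⟩ := hv
    have hentry := hvw ⟨k, hk⟩
    simp only [List.get_eq_getElem] at hentry hm
    show m ≤ g k
    exact hentry ▸ hm
  · exact hvw ▸ hv

theorem entryGE_of_le {v : Sig} {k : ℕ} {m m' : ℕ+} (hv : entryGE v k m) (hm : m' ≤ m) :
    entryGE v k m' := by
  rcases v with l | f
  · obtain ⟨hk, hl⟩ := hv
    exact ⟨hk, hm.trans hl⟩
  · exact hm.trans hv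

theorem exists_entryGE_of_xLE {x y : XP} {v : Sig} (hxy : xLE x y)
    (hy : ∃ m : ℕ+, y.2 = m ∧ entryGE v y.1.natPred m) :
    ∃ m : ℕ+, x.2 = m ∧ entryGE v x.1.natPred m := by
  obtain ⟨m, hym, hv⟩ := hy
  obtain ⟨m', hxm', hm'⟩ := WithTop.le_coe_iff.mp (hym ▸ hxy.2)
  exact ⟨m', hxm', hxy.1 ▸ entryGE_of_le hv hm'⟩

theorem lLE_trans {a b c : LP} (hab : lLE a b) (hbc : lLE b c) : lLE a c := by
  rcases a with x | (a | a) <;> rcases b with y | (b | b) <;> rcases c with z | (c | c) <;>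
    simp only [lLE, sigOf, Sum.elim_inl, Sum.elim_inr, id] at hab hbc ⊢
  case inl.inl.inl => exact ⟨hab.1.trans hbc.1, hab.2.trans hbc.2⟩
  all_goals first
    | exact sigLE_trans hab hbc
    | exact exists_entryGE_of_xLE hab hbc
    | obtain ⟨m, hxm, hb⟩ := hab
      exact ⟨m, hxm, entryGE_of_sigLE hb hbc⟩

instance : IsTrans LP lLE := ⟨fun _ _ _ => lLE_trans⟩

def sigStar : Set LP := {u | ∃ a : Sig, u = toS' a}

theorem lLE_toS_of_lLE_toS' {d : LP} {a : Sig} (hd : d ∉ sigStar) (h : lLE d (toS' a)) :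
    lLE d (toS a) := by
  rcases d with x | (c | c)
  · exact h
  · exact h
  · exact absurd ⟨c, rfl⟩ hd

theorem scottOpen_sigStar : ScottOpen lLE sigStar := by
  refine ⟨?_, fun D s _ hs ⟨a, hsa⟩ => ?_⟩
  · rintro _ ⟨a, rfl⟩ (y | (b | b)) h
    · exact h.elim
    · exact h.elim
    · exact ⟨b, rfl⟩
  · subst hsa
    by_contra! hD
    have hub : ∀ d ∈ D, lLE d (toS a) := fun d hd => lLE_toS_of_lLE_toS' (hD d hd) (hs.1 d hd)
    exact hs.2 _ hub

theorem stmt14 (D : Set LP) (s : LP) (hD : DirectedSet lLE D)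
    (hs : IsSupOf lLE D s) (hmem : ∃ a : Sig, s = toS' a) :
    DirectedSet lLE (D ∩ {u | ∃ a : Sig, u = toS' a}) ∧
    (∀ d ∈ D, ∃ e ∈ D ∩ {u | ∃ a : Sig, u = toS' a}, lLE d e) ∧
    IsSupOf lLE (D ∩ {u | ∃ a : Sig, u = toS' a}) s := by
  have hcof := scottOpen_sigStar.cofinal_inter hD hs hmem
  exact ⟨scottOpen_sigStar.directedSet_inter hD hs hmem, hcof,
    hs.of_cofinal Set.inter_subset_left hcof⟩
end

section
/- In the Scott topology on L, the set max L of maximal elements is not a G_δ-set: for any countable family {U_k : k ∈ ℕ₊} of Scott-open sets each containing max L, the intersection ⋂_k U_k contains a non-maximal element (namely some infinite sequence a ∈ Σ with a < a*). -/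
/-!
For every `m`, the maximal element `x_{m,ω}` is the supremum of the chain `x_{m,1} ≤ x_{m,2} ≤ ⋯`,
so a Scott open set containing it already contains some `x_{m,n}`. Choosing such an `n_k` for
`m = k + 1` in the `k`-th open set gives an infinite sequence `a = (n_1, n_2, …) ∈ Σ` lying above
`x_{k+1,n_k}`, hence in every open set; but `a < a*`, so `a` is not maximal.
-/

open Set

lemma sigLE_refl : ∀ a : Sig, sigLE a a
  | Sum.inl a => List.prefix_refl a.val
  | Sum.inr _ => rfl

lemma not_isMaximalEl_toS (a : Sig) : ¬ IsMaximalEl lLE (toS a) := fun h => by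
  simpa [toS, toS'] using h (toS' a) (sigLE_refl a)

lemma not_forall_entryGE : ∀ (v : Sig) (k : ℕ), ¬ ∀ n, entryGE v k n
  | Sum.inl l, k, h => by
    obtain ⟨hk, -⟩ := h 1
    obtain ⟨_, hle⟩ := h (l.val.get ⟨k, hk⟩ + 1)
    exact (PNat.lt_add_right _ 1).not_ge hle
  | Sum.inr f, k, h => (PNat.lt_add_right (f k) 1).not_ge (h (f k + 1))

lemma lLE_toX_toS_inr {m n : ℕ+} {f : ℕ → ℕ+} (h : n ≤ f m.natPred) :
    lLE (toX (m, n)) (toS (Sum.inr f)) :=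
  ⟨n, rfl, h⟩

def xChain (m : ℕ+) : Set LP := range fun n : ℕ+ => toX (m, n)

lemma directedSet_xChain (m : ℕ+) : DirectedSet lLE (xChain m) := by
  refine ⟨⟨_, 1, rfl⟩, ?_⟩
  rintro _ ⟨n₁, rfl⟩ _ ⟨n₂, rfl⟩
  exact ⟨_, ⟨max n₁ n₂, rfl⟩, ⟨rfl, WithTop.coe_le_coe.2 (le_max_left n₁ n₂)⟩,
    ⟨rfl, WithTop.coe_le_coe.2 (le_max_right n₁ n₂)⟩⟩

lemma isSupOf_xChain (m : ℕ+) : IsSupOf lLE (xChain m) (toX (m, ⊤)) := by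
  refine ⟨by rintro _ ⟨n, rfl⟩; exact ⟨rfl, le_top⟩, ?_⟩
  rintro (⟨m', n'⟩ | w) hu
  · refine ⟨(hu _ ⟨1, rfl⟩).1, ?_⟩
    rw [WithTop.eq_top_iff_forall_ge.2 fun n => (hu _ ⟨n, rfl⟩).2]
  · refine (not_forall_entryGE (sigOf w) m.natPred fun n => ?_).elim
    obtain ⟨n', hn', hentry⟩ := hu _ ⟨n, rfl⟩
    rwa [WithTop.coe_injective hn']

lemma isMaximalEl_toX_top (m : ℕ+) : IsMaximalEl lLE (toX (m, ⊤)) := by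
  rintro (⟨m', n'⟩ | w) hle
  · obtain ⟨rfl, hn'⟩ := hle
    obtain rfl : n' = ⊤ := top_le_iff.1 hn'
    rfl
  · obtain ⟨n, hn, -⟩ := hle
    exact (WithTop.coe_ne_top hn.symm).elim

lemma exists_toX_mem_of_scottOpen {U : Set LP} (hU : ScottOpen lLE U) {m : ℕ+}
    (hm : toX (m, ⊤) ∈ U) : ∃ n : ℕ+, toX (m, n) ∈ U := by
  obtain ⟨_, ⟨n, rfl⟩, hn⟩ := hU.2 _ _ (directedSet_xChain m) (isSupOf_xChain m) hm
  exact ⟨n, hn⟩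

theorem stmt18 (U : ℕ → Set LP)
    (hopen : ∀ k, ScottOpen lLE (U k))
    (hmax : ∀ k, {u : LP | IsMaximalEl lLE u} ⊆ U k) :
    ∃ f : ℕ → ℕ+,
      (∀ k, toS (Sum.inr f) ∈ U k) ∧ ¬ IsMaximalEl lLE (toS (Sum.inr f)) := by
  have hchain : ∀ k, ∃ n : ℕ+, toX (k.succPNat, n) ∈ U k := fun k =>
    exists_toX_mem_of_scottOpen (hopen k) (hmax k (isMaximalEl_toX_top _))
  choose f hf using hchain
  have hle : ∀ k, lLE (toX (k.succPNat, f k)) (toS (Sum.inr f)) := fun k =>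
    lLE_toX_toS_inr (by rw [Nat.natPred_succPNat])
  exact ⟨f, fun k => (hopen k).1 _ (hf k) _ (hle k), not_isMaximalEl_toS _⟩
end

section
/- There exists an ω-algebraic domain P such that the set Max(P) of maximal elements of P is not a G_δ-subset of the Scott space of P. -/
/-!
Take the ideal completion of a countable poset of tokens: finite binary words `plain w`, ordered
by prefix, and marked words `marked w`, which lie above the plain prefixes of `w`, while a marked
word lies below a longer marked word only if the latter has strictly more `true`s.
For `x : ℕ → Bool`, the ideal `branch x` of plain initial segments of `x` is maximal exactly
when `x` has finitely many `true`s: otherwise the marked initial segments of `x` are directed and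
enlarge it, and if not, an ideal above `branch x` can only contain initial segments of `x`, whose
numbers of `true`s are bounded, so it has no marked token. Since `branch x` is the directed
supremum of the compact ideals `principal (plain (initSeg x n))`, Scott open sets pull back along
`branch` to open subsets of Cantor space. A G_δ set `Max(P)` would thus make the finitely
supported sequences a countable dense G_δ set with dense complement, contradicting the Baire
category theorem.
-/

open Set

namespace Order.Ideal

variable {α : Type*} [Preorder α]

def directedSup (D : Set (Ideal α)) (hD : DirectedSet (· ≤ ·) D) : Ideal α :=
  (isIdeal_sUnion_of_directedOn (C := (SetLike.coe : Ideal α → Set α) '' D)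
    (by rintro _ ⟨I, -, rfl⟩; exact I.isIdeal) (directedOn_image.2 hD.2) (hD.1.image _)).toIdeal

theorem mem_directedSup {D : Set (Ideal α)} {hD : DirectedSet (· ≤ ·) D} {a : α} :
    a ∈ directedSup D hD ↔ ∃ I ∈ D, a ∈ I := by
  simp [directedSup, mem_toIdeal]

theorem isLUB_directedSup {D : Set (Ideal α)} (hD : DirectedSet (· ≤ ·) D) :
    IsLUB D (directedSup D hD) :=
  ⟨fun I hI _ ha => mem_directedSup.2 ⟨I, hI, ha⟩,
    fun _ hu _ ha => let ⟨_, hI, haI⟩ := mem_directedSup.1 ha; hu hI haI⟩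

theorem mem_of_isLUB {D : Set (Ideal α)} (hD : DirectedSet (· ≤ ·) D) {s : Ideal α}
    (hs : IsLUB D s) {a : α} (ha : a ∈ s) : ∃ I ∈ D, a ∈ I := by
  rw [hs.unique (isLUB_directedSup hD)] at ha
  exact mem_directedSup.1 ha

theorem directedSet_principal_image (I : Ideal α) :
    DirectedSet (· ≤ ·) (principal '' (I : Set α)) := by
  refine ⟨I.nonempty.image _, ?_⟩
  rintro _ ⟨a, ha, rfl⟩ _ ⟨b, hb, rfl⟩
  obtain ⟨c, hc, hac, hbc⟩ := I.directed a ha b hb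
  exact ⟨principal c, mem_image_of_mem _ hc, principal_le_iff.2 (mem_principal.2 hac),
    principal_le_iff.2 (mem_principal.2 hbc)⟩

theorem isLUB_principal_image (I : Ideal α) : IsLUB (principal '' (I : Set α)) I :=
  ⟨by rintro _ ⟨a, ha, rfl⟩; exact principal_le_iff.2 ha,
    fun _ hu a ha => principal_le_iff.1 (hu (mem_image_of_mem _ ha))⟩

theorem isCompactEl_principal (a : α) : IsCompactEl (· ≤ ·) (principal a) := by
  intro D s hD hs has
  obtain ⟨I, hI, haI⟩ := mem_of_isLUB hD hs (principal_le_iff.1 has)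
  exact ⟨I, hI, principal_le_iff.2 haI⟩

theorem exists_principal_eq_of_isCompactEl {c : Ideal α} (hc : IsCompactEl (· ≤ ·) c) :
    ∃ a, principal a = c := by
  obtain ⟨_, ⟨a, ha, rfl⟩, hca⟩ :=
    hc _ c (directedSet_principal_image c) (isLUB_principal_image c) le_rfl
  exact ⟨a, le_antisymm (principal_le_iff.2 ha) hca⟩

theorem setOf_isCompactEl_le (I : Ideal α) :
    {c | IsCompactEl (· ≤ ·) c ∧ c ≤ I} = principal '' (I : Set α) := by
  ext c
  constructor
  · rintro ⟨hc, hcI⟩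
    obtain ⟨a, rfl⟩ := exists_principal_eq_of_isCompactEl hc
    exact ⟨a, principal_le_iff.1 hcI, rfl⟩
  · rintro ⟨a, ha, rfl⟩
    exact ⟨isCompactEl_principal a, principal_le_iff.2 ha⟩

theorem countable_setOf_isCompactEl [Countable α] :
    {c : Ideal α | IsCompactEl (· ≤ ·) c}.Countable :=
  (countable_range principal).mono fun _ hc => exists_principal_eq_of_isCompactEl hc

theorem _root_.ScottOpen.exists_principal_mem {U : Set (Ideal α)} (hU : ScottOpen (· ≤ ·) U)
    {I : Ideal α} (hI : I ∈ U) : ∃ a ∈ I, principal a ∈ U := by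
  obtain ⟨_, ⟨a, ha, rfl⟩, haU⟩ :=
    hU.2 _ I (directedSet_principal_image I) (isLUB_principal_image I) hI
  exact ⟨a, ha, haU⟩

end Order.Ideal

def initSeg (x : ℕ → Bool) (n : ℕ) : List Bool := (List.range n).map x

@[simp]
theorem length_initSeg (x : ℕ → Bool) (n : ℕ) : (initSeg x n).length = n := by
  simp [initSeg]

theorem initSeg_succ (x : ℕ → Bool) (n : ℕ) : initSeg x (n + 1) = initSeg x n ++ [x n] := by
  simp [initSeg, List.range_succ]

theorem initSeg_prefix_initSeg (x : ℕ → Bool) {m n : ℕ} (h : m ≤ n) :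
    initSeg x m <+: initSeg x n := by
  induction n, h using Nat.le_induction with
  | base => exact List.prefix_refl _
  | succ n _ ih => exact ih.trans (initSeg_succ x n ▸ List.prefix_append _ _)

theorem eq_initSeg_of_prefix {x : ℕ → Bool} {w : List Bool} {n : ℕ} (h : w <+: initSeg x n) :
    w = initSeg x w.length := by
  have hlen : w.length ≤ n := by simpa using h.length_le
  exact (List.prefix_of_prefix_length_le h (initSeg_prefix_initSeg x hlen) (by simp)).eq_of_length
    (by simp)

theorem initSeg_congr {x y : ℕ → Bool} {n : ℕ} (h : ∀ i < n, y i = x i) :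
    initSeg y n = initSeg x n :=
  List.map_congr_left fun i hi => h i (List.mem_range.1 hi)

theorem count_true_initSeg (x : ℕ → Bool) (n : ℕ) :
    (initSeg x n).count true = Nat.count (fun i => x i = true) n := by
  induction n with
  | zero => simp [initSeg]
  | succ n ih => cases hx : x n <;> simp [initSeg_succ, Nat.count_succ, ih, hx]

inductive Token
  | plain (w : List Bool)
  | marked (w : List Bool)
  deriving Countable

namespace Token

def word : Token → List Bool
  | plain w => w
  | marked w => w

protected def Le : Token → Token → Prop
  | plain v, plain w => v <+: w
  | plain v, marked w => v <+: w
  | marked v, marked w => v = w ∨ v <+: w ∧ v.count true < w.count true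
  | marked _, plain _ => False

instance : Preorder Token where
  le := Token.Le
  le_refl
    | plain w => List.prefix_refl w
    | marked w => Or.inl rfl
  le_trans
    | plain _, plain _, plain _, h₁, h₂ => List.IsPrefix.trans h₁ h₂
    | plain _, plain _, marked _, h₁, h₂ => List.IsPrefix.trans h₁ h₂
    | plain _, marked _, marked _, h₁, Or.inl rfl => h₁
    | plain _, marked _, marked _, h₁, Or.inr h₂ => List.IsPrefix.trans h₁ h₂.1
    | marked _, marked _, marked _, Or.inl rfl, h₂ => h₂
    | marked _, marked _, marked _, Or.inr h₁, Or.inl rfl => Or.inr h₁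
    | marked _, marked _, marked _, Or.inr h₁, Or.inr h₂ =>
      Or.inr ⟨h₁.1.trans h₂.1, h₁.2.trans h₂.2⟩

theorem word_prefix_of_le : ∀ {a b : Token}, a ≤ b → a.word <+: b.word
  | plain _, plain _, h => h
  | plain _, marked _, h => h
  | marked _, marked _, Or.inl rfl => List.prefix_refl _
  | marked _, marked _, Or.inr h => h.1

theorem not_marked_le_plain (v w : List Bool) : ¬ marked v ≤ plain w := id

theorem le_marked_of_count_lt {a : Token} {w : List Bool} (h : a.word <+: w)
    (hc : a.word.count true < w.count true) : a ≤ marked w := by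
  cases a with
  | plain v => exact h
  | marked v => exact Or.inr ⟨h, hc⟩

theorem eq_initSeg_of_le_plain {x : ℕ → Bool} {a : Token} {n : ℕ}
    (h : a ≤ plain (initSeg x n)) : a = plain (initSeg x a.word.length) := by
  cases a with
  | plain v => exact congrArg plain (eq_initSeg_of_prefix h)
  | marked v => exact absurd h (not_marked_le_plain _ _)

def branch (x : ℕ → Bool) : Order.Ideal Token where
  carrier := range fun n => plain (initSeg x n)
  lower' := by
    rintro a _ h ⟨n, rfl⟩
    exact ⟨_, (eq_initSeg_of_le_plain h).symm⟩
  nonempty' := range_nonempty _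
  directed' := by
    rintro _ ⟨m, rfl⟩ _ ⟨n, rfl⟩
    exact ⟨_, mem_range_self (max m n), initSeg_prefix_initSeg x (le_max_left m n),
      initSeg_prefix_initSeg x (le_max_right m n)⟩

theorem exists_count_lt_of_infinite {x : ℕ → Bool} (hx : {i | x i = true}.Infinite) (n : ℕ) :
    ∃ p, n ≤ p ∧ (initSeg x n).count true < (initSeg x p).count true := by
  obtain ⟨i, hi, hni⟩ := hx.exists_gt n
  refine ⟨i + 1, by omega, ?_⟩
  simp only [count_true_initSeg]
  exact Nat.lt_of_le_of_lt (Nat.count_monotone _ hni.le) (Nat.count_lt_count_succ_iff.2 hi)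

def markedBranch (x : ℕ → Bool) (hx : {i | x i = true}.Infinite) : Order.Ideal Token where
  carrier := {a | a.word = initSeg x a.word.length}
  lower' := by
    intro a b h hb
    exact eq_initSeg_of_prefix (hb ▸ word_prefix_of_le h :)
  nonempty' := ⟨plain (initSeg x 0), by simp [word]⟩
  directed' := by
    intro a ha b hb
    obtain ⟨p, hp, hcount⟩ := exists_count_lt_of_infinite hx (max a.word.length b.word.length)
    have hup : ∀ c : Token, c.word = initSeg x c.word.length →
        c.word.length ≤ max a.word.length b.word.length → c ≤ marked (initSeg x p) := by
      intro c hc hle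
      refine le_marked_of_count_lt ?_ ?_ <;> rw [hc]
      · exact initSeg_prefix_initSeg x (hle.trans hp)
      · exact ((initSeg_prefix_initSeg x hle).count_le true).trans_lt hcount
    exact ⟨marked (initSeg x p), by simp [word], hup a ha (le_max_left _ _),
      hup b hb (le_max_right _ _)⟩

theorem mem_markedBranch {x : ℕ → Bool} {hx : {i | x i = true}.Infinite} {a : Token} :
    a ∈ markedBranch x hx ↔ a.word = initSeg x a.word.length :=
  Iff.rfl

theorem branch_lt_markedBranch {x : ℕ → Bool} (hx : {i | x i = true}.Infinite) :
    branch x < markedBranch x hx := by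
  refine lt_of_le_of_ne ?_ fun h => ?_
  · rintro _ ⟨n, rfl⟩
    simp [mem_markedBranch, word]
  · have hmarked : marked (initSeg x 0) ∈ markedBranch x hx := by simp [mem_markedBranch, word]
    obtain ⟨n, hn⟩ := h ▸ hmarked
    cases hn

theorem word_eq_initSeg_of_branch_le {x : ℕ → Bool} {J : Order.Ideal Token}
    (hJ : branch x ≤ J) {a : Token} (ha : a ∈ J) : a.word = initSeg x a.word.length := by
  obtain ⟨c, -, hac, hc⟩ := J.directed a ha _ (hJ (mem_range_self a.word.length))
  exact (List.prefix_of_prefix_length_le (word_prefix_of_le hac) (word_prefix_of_le hc)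
    (by simp [word])).eq_of_length (by simp [word])

theorem exists_marked_count_lt {x : ℕ → Bool} {J : Order.Ideal Token} (hJ : branch x ≤ J)
    {w : List Bool} (hw : marked w ∈ J) :
    ∃ u, marked u ∈ J ∧ w.count true < u.count true := by
  obtain ⟨c, hcJ, hwc, hc⟩ := J.directed _ hw _ (hJ (mem_range_self (w.length + 1)))
  cases c with
  | plain u => exact absurd hwc (not_marked_le_plain _ _)
  | marked u =>
    rcases hwc with rfl | ⟨-, hcount⟩
    · simpa [word] using (word_prefix_of_le hc).length_le
    · exact ⟨u, hcJ, hcount⟩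

theorem isMaximalEl_branch_of_finite {x : ℕ → Bool} (hx : {i | x i = true}.Finite) :
    IsMaximalEl (· ≤ ·) (branch x) := by
  intro J hJ
  set counts := {k | ∃ w, marked w ∈ J ∧ w.count true = k}
  have hbdd : BddAbove counts := by
    refine ⟨hx.toFinset.card, ?_⟩
    rintro _ ⟨w, hw, rfl⟩
    have hw' : w = initSeg x w.length := word_eq_initSeg_of_branch_le hJ hw
    rw [hw', count_true_initSeg]
    exact Nat.count_le_card hx _
  have hno_marked : ∀ w, marked w ∉ J := by
    intro w hw
    obtain ⟨u, hu, hmax⟩ := Nat.sSup_mem (s := counts) ⟨_, w, hw, rfl⟩ hbdd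
    obtain ⟨v, hv, hlt⟩ := exists_marked_count_lt hJ hu
    exact (le_csSup hbdd ⟨v, hv, rfl⟩).not_gt (hmax ▸ hlt)
  refine le_antisymm (fun a ha => ?_) hJ
  cases a with
  | plain w => exact ⟨w.length, (congrArg plain (word_eq_initSeg_of_branch_le hJ ha)).symm⟩
  | marked w => exact absurd ha (hno_marked w)

theorem isMaximalEl_branch_iff {x : ℕ → Bool} :
    IsMaximalEl (· ≤ ·) (branch x) ↔ {i | x i = true}.Finite := by
  refine ⟨fun h => Set.not_infinite.1 fun hx => ?_, isMaximalEl_branch_of_finite⟩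
  exact (branch_lt_markedBranch hx).ne (h _ (branch_lt_markedBranch hx).le).symm

theorem isOpen_preimage_branch {U : Set (Order.Ideal Token)} (hU : ScottOpen (· ≤ ·) U) :
    IsOpen (branch ⁻¹' U) := by
  refine (PiNat.isTopologicalBasis_cylinders fun _ => Bool).isOpen_iff.2 fun x hx => ?_
  obtain ⟨_, ⟨n, rfl⟩, hnU⟩ := hU.exists_principal_mem hx
  refine ⟨PiNat.cylinder x n, ⟨x, n, rfl⟩, PiNat.self_mem_cylinder x n,
    fun y hy => hU.1 _ hnU _ (Order.Ideal.principal_le_iff.2 ⟨n, ?_⟩)⟩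
  exact congrArg plain (initSeg_congr (PiNat.mem_cylinder_iff.1 hy))

end Token

theorem not_isGδ_of_countable_of_dense {X : Type*} [TopologicalSpace X] [T1Space X]
    [BaireSpace X] [Nonempty X] {s : Set X} (hs : s.Countable) (hd : Dense s) (hdc : Dense sᶜ) :
    ¬ IsGδ s := fun hG => by
  simpa using (hd.inter_of_Gδ hG hs.isGδ_compl hdc).nonempty

theorem dense_of_forall_exists_eq_of_lt {s : Set (ℕ → Bool)}
    (h : ∀ (x : ℕ → Bool) (n : ℕ), ∃ y ∈ s, ∀ i < n, y i = x i) : Dense s := by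
  refine (PiNat.isTopologicalBasis_cylinders fun _ => Bool).dense_iff.2 ?_
  rintro _ ⟨x, n, rfl⟩ -
  obtain ⟨y, hy, hyx⟩ := h x n
  exact ⟨y, PiNat.mem_cylinder_iff.2 hyx, hy⟩

theorem not_isGδ_setOf_finite_true : ¬ IsGδ {x : ℕ → Bool | {i | x i = true}.Finite} := by
  refine not_isGδ_of_countable_of_dense ?_ ?_ ?_
  · refine (countable_range fun s : Finset ℕ => fun i => decide (i ∈ s)).mono fun x hx => ?_
    exact ⟨hx.toFinset, funext fun i => by simp⟩
  · refine dense_of_forall_exists_eq_of_lt fun (x : ℕ → Bool) n =>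
      ⟨fun i => if i < n then x i else false, ?_, fun i hi => by simp [hi]⟩
    exact (finite_lt_nat n).subset fun i hi => by simp_all
  · refine dense_of_forall_exists_eq_of_lt fun (x : ℕ → Bool) n =>
      ⟨fun i => if i < n then x i else true, ?_, fun i hi => by simp [hi]⟩
    exact (Ici_infinite n).mono fun i hi => by simp [mem_Ici.1 hi]

theorem stmt19 :
    ∃ (P : Type) (r : P → P → Prop),
      Reflexive r ∧ Transitive r ∧ AntiSymmetric r ∧
      (∀ D : Set P, DirectedSet r D → ∃ s, IsSupOf r D s) ∧
      (∀ x : P,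
        DirectedSet r {c | IsCompactEl r c ∧ r c x} ∧
        IsSupOf r {c | IsCompactEl r c ∧ r c x} x) ∧
      {c : P | IsCompactEl r c}.Countable ∧
      ¬ ∃ U : ℕ → Set P, (∀ n, ScottOpen r (U n)) ∧
          {x : P | IsMaximalEl r x} = ⋂ n, U n := by
  refine ⟨Order.Ideal Token, (· ≤ ·), fun _ => le_rfl, fun _ _ _ => le_trans,
    fun _ _ => le_antisymm, fun D hD => ⟨_, Order.Ideal.isLUB_directedSup hD⟩, fun I => ?_,
    Order.Ideal.countable_setOf_isCompactEl, ?_⟩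
  · rw [Order.Ideal.setOf_isCompactEl_le]
    exact ⟨Order.Ideal.directedSet_principal_image I, Order.Ideal.isLUB_principal_image I⟩
  · rintro ⟨U, hU, hmax⟩
    have hpre : {x : ℕ → Bool | {i | x i = true}.Finite} = ⋂ n, Token.branch ⁻¹' U n := by
      rw [← preimage_iInter, ← hmax]
      ext x
      exact Token.isMaximalEl_branch_iff.symm
    exact not_isGδ_setOf_finite_true
      (hpre ▸ IsGδ.iInter_of_isOpen fun n => Token.isOpen_preimage_branch (hU n))
end
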